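/- Let G be a finite simple graph in which every vertex has degree at least δ, where δ ≥ 1, let J be a δ-regular spanning subgraph of G with h edges, and let uv be an edge of J. Writing Δ(w) = deg_G(w) − δ, the probability that J ⊆ G_ω and e_{k(ω)} = uv equals (1/h) · [ 1/binom(h+Δ(u), h) + 1/binom(h+Δ(v), h) − 1/binom(h+Δ(u)+Δ(v), h) ]. -/

import Mathlib

open Finset

/-- The degree of a vertex `v` in the graph whose edge set is the finite set `s`
of edges (elements of `Sym2 V`). -/
def degIn {V : Type*} [DecidableEq V] (s : Finset (Sym2 V)) (v : V) : ℕ :=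
  (s.filter (fun e => v ∈ e)).card

/-- Given an ordering `ω` of a finite set `s` of edges, the set consisting of the
first `i` edges `e_{ω(1)}, …, e_{ω(i)}`. -/
def prefixEdges {V : Type*} [DecidableEq V] {s : Finset (Sym2 V)}
    (ω : Fin s.card ≃ {e : Sym2 V // e ∈ s}) (i : ℕ) : Finset (Sym2 V) :=
  (Finset.univ.filter (fun j : Fin s.card => (j : ℕ) < i)).image (fun j => (ω j : Sym2 V))

/-- `k(ω)`: the least `i` such that every vertex has degree at least `δ` in the graph
formed by the first `i` edges of the ordering `ω`. -/
noncomputable def stopIndex {V : Type*} [Fintype V] [DecidableEq V] (δ : ℕ)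
    {s : Finset (Sym2 V)} (ω : Fin s.card ≃ {e : Sym2 V // e ∈ s}) : ℕ :=
  sInf {i | ∀ v : V, δ ≤ degIn (prefixEdges ω i) v}

/-- The edge set of `G_ω`, i.e. the first `k(ω)` edges of the ordering `ω`. -/
noncomputable def finalEdges {V : Type*} [Fintype V] [DecidableEq V] (δ : ℕ)
    {s : Finset (Sym2 V)} (ω : Fin s.card ≃ {e : Sym2 V // e ∈ s}) : Finset (Sym2 V) :=
  prefixEdges ω (stopIndex δ ω)

/-- A graph is `δ`-regular: every vertex has exactly `δ` neighbours. -/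
def regOfDegree {V : Type*} (J : SimpleGraph V) (δ : ℕ) : Prop :=
  ∀ v : V, (J.neighborSet v).ncard = δ

/-- `e` is the last edge `e_{k(ω)}` of `G_ω`: it belongs to the first `k(ω)` edges but
not to the first `k(ω) − 1` edges. -/
noncomputable def lastEdgeIs {V : Type*} [Fintype V] [DecidableEq V] (δ : ℕ)
    {s : Finset (Sym2 V)} (ω : Fin s.card ≃ {e : Sym2 V // e ∈ s}) (e : Sym2 V) : Prop :=
  e ∈ prefixEdges ω (stopIndex δ ω) ∧ e ∉ prefixEdges ω (stopIndex δ ω - 1)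

/-!
Let `e₀ = uv` stand at position `t` of `ω`. Because `J` is `δ`-regular and contains `e₀`, the
event `J ⊆ G_ω`, `e_{k(ω)} = uv` happens exactly when every other edge of `J` comes before `e₀`
and, at `u` or at `v`, every edge of `G - J` comes after `e₀`: the first `t + 1` edges then
contain `J`, and among the first `t` edges that endpoint meets only the `δ - 1` other edges of `J`.

A uniform ordering puts a set `A` of edges before `e₀` and a disjoint set `B` after it with
probability `|A|! |B|! / (|A| + |B| + 1)!`. Inclusion–exclusion over the two endpoints, with
`|A| = h - 1` and `|B| = Δ(u)`, `Δ(v)`, `Δ(u) + Δ(v)`, gives the formula.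
-/

section Rank

variable {α : Type*} [LinearOrder α]

def rankIn (T : Finset α) (j : α) : ℕ := #{i ∈ T | i < j}

lemma rankIn_mono (T : Finset α) : Monotone (rankIn T) := fun _ _ hij =>
  card_le_card (monotone_filter_right T fun _ _ hi => hi.trans_le hij)

lemma rankIn_lt_rankIn {T : Finset α} {i j : α} (hi : i ∈ T) (hij : i < j) :
    rankIn T i < rankIn T j :=
  card_lt_card <| (ssubset_iff_of_subset (monotone_filter_right T fun _ _ h => h.trans hij)).2
    ⟨i, by simp [hi, hij], by simp⟩

lemma strictMonoOn_rankIn (T : Finset α) : StrictMonoOn (rankIn T) T :=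
  fun _ hi _ _ hij => rankIn_lt_rankIn hi hij

lemma rankIn_lt_card {T : Finset α} {j : α} (hj : j ∈ T) : rankIn T j < #T :=
  card_lt_card <| (ssubset_iff_of_subset (filter_subset _ T)).2 ⟨j, hj, by simp⟩

lemma image_rankIn (T : Finset α) : T.image (rankIn T) = range #T :=
  eq_of_subset_of_card_le
    (fun _ hk => by
      obtain ⟨j, hj, rfl⟩ := mem_image.1 hk
      exact mem_range.2 (rankIn_lt_card hj))
    (by rw [card_range, card_image_of_injOn (strictMonoOn_rankIn T).injOn])

lemma card_filter_rankIn (T : Finset α) (p : ℕ → Prop) [DecidablePred p] :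
    #{j ∈ T | p (rankIn T j)} = #{k ∈ range #T | p k} := by
  rw [← image_rankIn, filter_image,
    card_image_of_injOn ((strictMonoOn_rankIn T).injOn.mono (filter_subset _ _))]

def rankColour (a : ℕ) (T : Finset α) (j : α) : Fin 4 :=
  if j ∈ T then (if rankIn T j < a then 0 else if rankIn T j = a then 1 else 2) else 3

variable {a : ℕ} {T : Finset α} {j : α}

lemma rankColour_eq_zero_iff : rankColour a T j = 0 ↔ j ∈ T ∧ rankIn T j < a := by
  unfold rankColour; split_ifs <;> grind

lemma rankColour_eq_one_iff : rankColour a T j = 1 ↔ j ∈ T ∧ rankIn T j = a := by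
  unfold rankColour; split_ifs <;> grind

lemma rankColour_eq_two_iff : rankColour a T j = 2 ↔ j ∈ T ∧ a < rankIn T j := by
  unfold rankColour; split_ifs <;> grind

lemma rankColour_eq_three_iff : rankColour a T j = 3 ↔ j ∉ T := by
  unfold rankColour; split_ifs <;> grind

lemma card_rankColour_fiber [Fintype α] (ha : a < #T) (k : Fin 4) :
    Fintype.card {j // rankColour a T j = k} = ![a, 1, #T - a - 1, Fintype.card α - #T] k := by
  match k with
  | 0 =>
    rw [Fintype.card_of_subtype {j ∈ T | rankIn T j < a} fun _ => by
      rw [mem_filter, rankColour_eq_zero_iff], card_filter_rankIn T (· < a),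
      show {k ∈ range #T | k < a} = range a by ext; simp; omega, card_range]
    rfl
  | 1 =>
    rw [Fintype.card_of_subtype {j ∈ T | rankIn T j = a} fun _ => by
      rw [mem_filter, rankColour_eq_one_iff], card_filter_rankIn T (· = a), range_filter_eq,
      if_pos ha, card_singleton]
    rfl
  | 2 =>
    rw [Fintype.card_of_subtype {j ∈ T | a < rankIn T j} fun _ => by
      rw [mem_filter, rankColour_eq_two_iff], card_filter_rankIn T (a < ·),
      show {k ∈ range #T | a < k} = Ioo a #T by ext; simp; omega, Nat.card_Ioo]
    rfl
  | 3 =>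
    rw [Fintype.card_of_subtype Tᶜ fun _ => (mem_compl.trans rankColour_eq_three_iff.symm),
      card_compl]
    rfl

end Rank

open Nat in
theorem card_equiv_comp_eq {α β γ : Type*} [Fintype α] [Fintype β] [Fintype γ]
    [DecidableEq α] [DecidableEq β] [DecidableEq γ] (c : α → γ) (f : β → γ)
    (h : ∀ k, Fintype.card {j // c j = k} = Fintype.card {x // f x = k}) :
    Fintype.card {ω : α ≃ β // f ∘ ω = c} = ∏ k, (Fintype.card {j // c j = k})! := by
  let ω₀ : α ≃ β := Equiv.ofFiberEquiv fun k => Fintype.equivOfCardEq (h k)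
  have hω₀ : f ∘ ω₀ = c := funext (Equiv.ofFiberEquiv_map _)
  rw [← DomMulAct.stabilizer_card c]
  refine Fintype.card_congr (Equiv.subtypeEquiv ((Equiv.refl α).equivCongr ω₀.symm) fun ω => ?_)
  have hcomp : c ∘ ((Equiv.refl α).equivCongr ω₀.symm ω) = f ∘ ω := by
    rw [← hω₀]
    ext
    simp
  rw [hcomp]

section Orderings

variable {E : Type*} [DecidableEq E] {A B C : Finset E} {e₀ : E} {m : ℕ}

def LiesBetween (ω : Fin m ≃ E) (A : Finset E) (e₀ : E) (B : Finset E) : Prop :=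
  (∀ x ∈ A, ω.symm x < ω.symm e₀) ∧ ∀ y ∈ B, ω.symm e₀ < ω.symm y

lemma liesBetween_union {ω : Fin m ≃ E} :
    LiesBetween ω A e₀ (B ∪ C) ↔ LiesBetween ω A e₀ B ∧ LiesBetween ω A e₀ C := by
  simp only [LiesBetween, mem_union]
  grind

def blockColour (A : Finset E) (e₀ : E) (B : Finset E) (x : E) : Fin 4 :=
  if x ∈ A then 0 else if x = e₀ then 1 else if x ∈ B then 2 else 3

lemma blockColour_eq_zero_iff {x : E} : blockColour A e₀ B x = 0 ↔ x ∈ A := by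
  unfold blockColour; split_ifs <;> simp_all

lemma blockColour_eq_one_iff (hA : e₀ ∉ A) {x : E} : blockColour A e₀ B x = 1 ↔ x = e₀ := by
  unfold blockColour; split_ifs <;> grind

lemma blockColour_eq_two_iff (hB : e₀ ∉ B) (hAB : Disjoint A B) {x : E} :
    blockColour A e₀ B x = 2 ↔ x ∈ B := by
  unfold blockColour; split_ifs <;> simp_all [disjoint_left]

lemma blockColour_eq_three_iff {x : E} : blockColour A e₀ B x = 3 ↔ x ∉ insert e₀ (A ∪ B) := by
  unfold blockColour; split_ifs <;> simp_all

lemma card_insert_union (hA : e₀ ∉ A) (hB : e₀ ∉ B) (hAB : Disjoint A B) :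
    #(insert e₀ (A ∪ B)) = #A + #B + 1 := by
  rw [card_insert_of_notMem (by simp [hA, hB]), card_union_of_disjoint hAB]

lemma card_blockColour_fiber [Fintype E] (hA : e₀ ∉ A) (hB : e₀ ∉ B) (hAB : Disjoint A B)
    (k : Fin 4) :
    Fintype.card {x // blockColour A e₀ B x = k} =
      ![#A, 1, #B, Fintype.card E - (#A + #B + 1)] k := by
  match k with
  | 0 => exact Fintype.card_of_subtype A fun _ => blockColour_eq_zero_iff.symm
  | 1 => exact Fintype.card_of_subtype {e₀} fun _ => by simp [blockColour_eq_one_iff hA]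
  | 2 => exact Fintype.card_of_subtype B fun _ => (blockColour_eq_two_iff hB hAB).symm
  | 3 =>
    rw [Fintype.card_of_subtype _ fun _ => (mem_compl.trans blockColour_eq_three_iff.symm),
      card_compl, card_insert_union hA hB hAB]
    rfl

lemma liesBetween_of_comp_eq_rankColour (hA : e₀ ∉ A) (hB : e₀ ∉ B) (hAB : Disjoint A B)
    {ω : Fin m ≃ E} {a : ℕ} {T : Finset (Fin m)}
    (hω : blockColour A e₀ B ∘ ω = rankColour a T) : LiesBetween ω A e₀ B := by
  have hcol (x : E) : rankColour a T (ω.symm x) = blockColour A e₀ B x := by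
    simp [← hω]
  obtain ⟨-, hpos⟩ :=
    rankColour_eq_one_iff.1 ((hcol e₀).trans ((blockColour_eq_one_iff hA).2 rfl))
  constructor
  · intro x hx
    have := (rankColour_eq_zero_iff.1 ((hcol x).trans (blockColour_eq_zero_iff.2 hx))).2
    by_contra! hle
    linarith [rankIn_mono T hle]
  · intro y hy
    have := (rankColour_eq_two_iff.1 ((hcol y).trans ((blockColour_eq_two_iff hB hAB).2 hy))).2
    by_contra! hle
    linarith [rankIn_mono T hle]

lemma comp_eq_rankColour_of_liesBetween (hA : e₀ ∉ A) (hB : e₀ ∉ B) (hAB : Disjoint A B)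
    {ω : Fin m ≃ E} (hω : LiesBetween ω A e₀ B) :
    blockColour A e₀ B ∘ ω = rankColour #A ((insert e₀ (A ∪ B)).map ω.symm.toEmbedding) := by
  set T := (insert e₀ (A ∪ B)).map ω.symm.toEmbedding
  have hT (j : Fin m) : j ∈ T ↔ ω j ∈ insert e₀ (A ∪ B) := by
    simp only [T, mem_map_equiv, Equiv.symm_symm]
  have hbelow : {i ∈ T | i < ω.symm e₀} = A.map ω.symm.toEmbedding := by
    ext i
    simp only [mem_filter, hT, mem_map_equiv, Equiv.symm_symm, mem_insert, mem_union]
    constructor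
    · rintro ⟨hi | hi | hi, hlt⟩
      · simp [← hi] at hlt
      · exact hi
      · exact absurd (hω.2 _ hi) (by simpa using hlt.asymm)
    · intro hi
      exact ⟨Or.inr (Or.inl hi), by simpa using hω.1 _ hi⟩
  have hrank : rankIn T (ω.symm e₀) = #A := by rw [rankIn, hbelow, card_map]
  funext j
  obtain hj | rfl | hj | hj :
      ω j ∈ A ∨ j = ω.symm e₀ ∨ ω j ∈ B ∨ ω j ∉ insert e₀ (A ∪ B) := by
    rw [Equiv.eq_symm_apply]
    simp only [mem_insert, mem_union]
    tauto
  · rw [Function.comp_apply, blockColour_eq_zero_iff.2 hj, eq_comm, rankColour_eq_zero_iff, hT]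
    refine ⟨by simp [hj], hrank ▸ rankIn_lt_rankIn (by simp [hT, hj]) ?_⟩
    simpa using hω.1 _ hj
  · rw [Function.comp_apply, Equiv.apply_symm_apply, (blockColour_eq_one_iff hA).2 rfl, eq_comm,
      rankColour_eq_one_iff, hT]
    exact ⟨by simp, hrank⟩
  · rw [Function.comp_apply, (blockColour_eq_two_iff hB hAB).2 hj, eq_comm, rankColour_eq_two_iff,
      hT]
    refine ⟨by simp [hj], hrank ▸ rankIn_lt_rankIn (by simp [hT]) ?_⟩
    simpa using hω.2 _ hj
  · rw [Function.comp_apply, blockColour_eq_three_iff.2 hj, eq_comm, rankColour_eq_three_iff, hT]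
    exact hj

lemma liesBetween_and_map_eq_iff (hA : e₀ ∉ A) (hB : e₀ ∉ B) (hAB : Disjoint A B)
    {ω : Fin m ≃ E} {T : Finset (Fin m)} :
    LiesBetween ω A e₀ B ∧ (insert e₀ (A ∪ B)).map ω.symm.toEmbedding = T ↔
      blockColour A e₀ B ∘ ω = rankColour #A T := by
  constructor
  · rintro ⟨hω, rfl⟩
    exact comp_eq_rankColour_of_liesBetween hA hB hAB hω
  · intro hω
    refine ⟨liesBetween_of_comp_eq_rankColour hA hB hAB hω, ?_⟩
    ext j
    rw [mem_map_equiv, Equiv.symm_symm, ← not_iff_not, ← blockColour_eq_three_iff,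
      ← rankColour_eq_three_iff (a := #A), ← hω, Function.comp_apply]

/- Split the orderings by the set `T` of positions of `insert e₀ (A ∪ B)`. The fibre over `T`
consists of the orderings with colour word `rankColour #A T`, so each of the
`m.choose (#A + #B + 1)` fibres has `(#A)! (#B)! (m - (#A + #B + 1))!` elements. -/
open Nat in
theorem ncard_liesBetween [Fintype E] (hm : Fintype.card E = m) (hA : e₀ ∉ A) (hB : e₀ ∉ B)
    (hAB : Disjoint A B) :
    {ω : Fin m ≃ E | LiesBetween ω A e₀ B}.ncard =
      m.choose (#A + #B + 1) * ((#A)! * (#B)! * (m - (#A + #B + 1))!) := by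
  classical
  set S := insert e₀ (A ∪ B)
  set s := #A + #B + 1
  have hfibre (T : Finset (Fin m)) (hT : #T = s) :
      #{ω | LiesBetween ω A e₀ B ∧ S.map ω.symm.toEmbedding = T} =
        (#A)! * (#B)! * (m - s)! := by
    have hb : s - #A - 1 = #B := by omega
    rw [filter_congr fun ω _ => liesBetween_and_map_eq_iff hA hB hAB, ← Fintype.card_subtype,
      card_equiv_comp_eq, Fin.prod_univ_four]
    · simp [card_rankColour_fiber (show #A < #T by omega), hT, hb]
    · intro k
      rw [card_rankColour_fiber (by omega), card_blockColour_fiber hA hB hAB, hm, hT, hb,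
        Fintype.card_fin]
  rw [Set.ncard_eq_toFinset_card', Set.toFinset_ofPred,
    card_eq_sum_card_fiberwise (f := fun ω => S.map ω.symm.toEmbedding)
      (t := powersetCard s univ) fun ω _ => by
        rw [mem_coe, mem_powersetCard_univ, card_map, card_insert_union hA hB hAB]]
  simp only [filter_filter]
  rw [sum_congr rfl fun T hT => hfibre T (mem_powersetCard_univ.1 hT), sum_const,
    card_powersetCard, Finset.card_univ, Fintype.card_fin, smul_eq_mul]

open Nat in
theorem ncard_liesBetween_div [Fintype E] (hm : Fintype.card E = m) (hA : e₀ ∉ A)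
    (hB : e₀ ∉ B) (hAB : Disjoint A B) :
    ({ω : Fin m ≃ E | LiesBetween ω A e₀ B}.ncard : ℝ) / Fintype.card (Fin m ≃ E) =
      (#A)! * (#B)! / (#A + #B + 1)! := by
  have hs : #A + #B + 1 ≤ m := hm ▸ card_insert_union hA hB hAB ▸ card_le_univ _
  rw [ncard_liesBetween hm hA hB hAB, Fintype.card_equiv (Fintype.equivFinOfCardEq hm).symm,
    Fintype.card_fin, ← Nat.choose_mul_factorial_mul_factorial hs]
  have : (0 : ℝ) < m.choose (#A + #B + 1) := by exact_mod_cast Nat.choose_pos hs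
  push_cast
  field_simp

open Nat in
theorem ncard_liesBetween_or_div [Fintype E] (hm : Fintype.card E = m) (hA : e₀ ∉ A)
    (hB : e₀ ∉ B) (hC : e₀ ∉ C) (hAB : Disjoint A B) (hAC : Disjoint A C) (hBC : Disjoint B C) :
    ({ω : Fin m ≃ E | LiesBetween ω A e₀ B ∨ LiesBetween ω A e₀ C}.ncard : ℝ) /
        Fintype.card (Fin m ≃ E) =
      (#A)! * (#B)! / (#A + #B + 1)! + (#A)! * (#C)! / (#A + #C + 1)! -
        (#A)! * (#B + #C)! / (#A + (#B + #C) + 1)! := by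
  have hinter : {ω : Fin m ≃ E | LiesBetween ω A e₀ B} ∩ {ω | LiesBetween ω A e₀ C} =
      {ω | LiesBetween ω A e₀ (B ∪ C)} := by
    ext
    simp [liesBetween_union]
  have hunion := Set.ncard_union_add_ncard_inter {ω : Fin m ≃ E | LiesBetween ω A e₀ B}
    {ω | LiesBetween ω A e₀ C}
  rw [hinter] at hunion
  rw [← ncard_liesBetween_div hm hA hB hAB, ← ncard_liesBetween_div hm hA hC hAC,
    ← card_union_of_disjoint hBC,
    ← ncard_liesBetween_div hm hA (by simp [hB, hC]) (disjoint_union_right.2 ⟨hAB, hAC⟩),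
    Set.ofPred_or, ← add_div, ← sub_div]
  congr 1
  have := congrArg (Nat.cast (R := ℝ)) hunion
  push_cast at this
  linarith

end Orderings

open Nat in
lemma factorial_pred_mul_factorial_div_factorial {h : ℕ} (hh : 0 < h) (b : ℕ) :
    ((h - 1)! * b ! : ℝ) / (h - 1 + b + 1)! = 1 / h * (1 / (h + b).choose h) := by
  obtain ⟨a, rfl⟩ := Nat.exists_eq_add_of_lt hh
  simp only [zero_add, add_tsub_cancel_right]
  rw [show a + b + 1 = a + 1 + b by ring, ← Nat.add_choose_mul_factorial_mul_factorial (a + 1) b,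
    factorial_succ]
  have : (0 : ℝ) < (a + 1 + b).choose (a + 1) := by exact_mod_cast Nat.choose_pos (by omega)
  rw [Nat.choose_symm_add] at this ⊢
  push_cast
  field_simp

section EdgeSets

variable {V : Type*} [DecidableEq V] {s K : Finset (Sym2 V)} {e : Sym2 V} {δ : ℕ}

lemma degIn_mono {s t : Finset (Sym2 V)} (hst : s ⊆ t) (w : V) : degIn s w ≤ degIn t w :=
  card_le_card (filter_subset_filter _ hst)

lemma degIn_inter_add_degIn_sdiff (P K : Finset (Sym2 V)) (w : V) :
    degIn (P ∩ K) w + degIn (P \ K) w = degIn P w := by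
  unfold degIn
  rw [← card_inter_add_card_sdiff {e ∈ P | w ∈ e} K, filter_inter]
  congr 2
  ext
  simp only [mem_filter, mem_sdiff]
  tauto

lemma degIn_sdiff (hKs : K ⊆ s) (w : V) : degIn (s \ K) w = degIn s w - degIn K w := by
  rw [← degIn_inter_add_degIn_sdiff s K, inter_eq_right.2 hKs]
  omega

lemma degIn_erase_add (he : e ∈ K) (w : V) :
    degIn (K.erase e) w + (if w ∈ e then 1 else 0) = degIn K w := by
  unfold degIn
  rw [filter_erase]
  split_ifs with hw
  · exact card_erase_add_one (mem_filter.2 ⟨he, hw⟩)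
  · rw [erase_eq_of_notMem (by simp [hw]), add_zero]

lemma degIn_eq_zero_iff {w : V} : degIn s w = 0 ↔ ∀ y ∈ s, w ∉ y := by
  rw [degIn, card_eq_zero, filter_eq_empty_iff]

lemma degIn_lt_iff_of_inter_eq_erase {P : Finset (Sym2 V)} (hK : ∀ w, degIn K w = δ)
    (he : e ∈ K) (hPK : P ∩ K = K.erase e) (w : V) :
    degIn P w < δ ↔ w ∈ e ∧ ∀ y ∈ P \ K, w ∉ y := by
  have herase := degIn_erase_add he w
  rw [← degIn_inter_add_degIn_sdiff P K, hPK, ← degIn_eq_zero_iff, ← hK w]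
  split_ifs at herase with hw <;> simp only [hw, true_and, false_and, iff_false] <;> omega

lemma mem_prefixEdges_iff (ω : Fin #s ≃ {e // e ∈ s}) (i : ℕ) (x : {e // e ∈ s}) :
    x.1 ∈ prefixEdges ω i ↔ (ω.symm x : ℕ) < i := by
  simp only [prefixEdges, mem_image, mem_filter, mem_univ, true_and]
  constructor
  · rintro ⟨j, hj, hjx⟩
    rwa [← Subtype.ext hjx, Equiv.symm_apply_apply]
  · exact fun hx => ⟨ω.symm x, hx, by simp⟩

lemma prefixEdges_subset (ω : Fin #s ≃ {e // e ∈ s}) (i : ℕ) : prefixEdges ω i ⊆ s := by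
  intro e he
  obtain ⟨j, -, rfl⟩ := mem_image.1 he
  exact (ω j).2

lemma prefixEdges_mono (ω : Fin #s ≃ {e // e ∈ s}) : Monotone (prefixEdges ω) :=
  fun _ _ hii' => image_subset_image (monotone_filter_right _ fun _ _ h => h.trans_le hii')

lemma subset_prefixEdges_succ_iff (hKs : K ⊆ s) (he : e ∈ K) (ω : Fin #s ≃ {e // e ∈ s}) :
    K ⊆ prefixEdges ω (ω.symm ⟨e, hKs he⟩ + 1) ↔
      ∀ x ∈ (K.erase e).subtype (· ∈ s), ω.symm x < ω.symm ⟨e, hKs he⟩ := by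
  constructor
  · intro hsub x hx
    rw [mem_subtype, mem_erase] at hx
    have hle := (mem_prefixEdges_iff ω _ x).1 (hsub hx.2)
    have hne : ω.symm x ≠ ω.symm ⟨e, hKs he⟩ := fun h => hx.1 (by simp [ω.symm.injective h])
    rw [Fin.lt_def]
    omega
  · intro h y hy
    by_cases hye : y = e
    · subst hye
      exact (mem_prefixEdges_iff ω _ ⟨y, hKs hy⟩).2 (lt_add_one _)
    · exact (mem_prefixEdges_iff ω _ ⟨y, hKs hy⟩).2
        (Nat.lt_succ_of_lt (h ⟨y, hKs hy⟩ (by simp [hye, hy])))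

lemma degIn_prefixEdges_lt_iff (hKs : K ⊆ s) (hK : ∀ w, degIn K w = δ) (he : e ∈ K)
    (ω : Fin #s ≃ {e // e ∈ s}) (hsub : K ⊆ prefixEdges ω (ω.symm ⟨e, hKs he⟩ + 1)) (w : V) :
    degIn (prefixEdges ω (ω.symm ⟨e, hKs he⟩)) w < δ ↔
      w ∈ e ∧ ∀ y ∈ {y ∈ s \ K | w ∈ y}.subtype (· ∈ s), ω.symm ⟨e, hKs he⟩ < ω.symm y := by
  set e₀ : {e // e ∈ s} := ⟨e, hKs he⟩
  have hPK : prefixEdges ω (ω.symm e₀) ∩ K = K.erase e := by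
    ext y
    simp only [mem_inter, mem_erase]
    refine ⟨fun ⟨hyP, hyK⟩ => ⟨?_, hyK⟩, fun ⟨hye, hyK⟩ => ⟨?_, hyK⟩⟩
    · rintro rfl
      exact lt_irrefl _ ((mem_prefixEdges_iff ω _ e₀).1 hyP)
    · exact (mem_prefixEdges_iff ω _ ⟨y, hKs hyK⟩).2
        ((subset_prefixEdges_succ_iff hKs he ω).1 hsub ⟨y, hKs hyK⟩ (by simp [hye, hyK]))
  rw [degIn_lt_iff_of_inter_eq_erase hK he hPK]
  refine and_congr_right fun _ => ⟨fun h y hy => ?_, fun h y hy hwy => ?_⟩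
  · simp only [mem_subtype, mem_filter, mem_sdiff] at hy
    have hye : y ≠ e₀ := fun hye => hy.1.2 (hye ▸ he)
    by_contra! hle
    have hlt : (ω.symm y : ℕ) < ω.symm e₀ :=
      lt_of_le_of_ne hle fun h => hye (ω.symm.injective (Fin.ext h))
    exact h y.1 (mem_sdiff.2 ⟨(mem_prefixEdges_iff ω _ y).2 hlt, hy.1.2⟩) hy.2
  · obtain ⟨hyP, hyK⟩ := mem_sdiff.1 hy
    have hys := prefixEdges_subset ω _ hyP
    have hlt := (mem_prefixEdges_iff ω _ ⟨y, hys⟩).1 hyP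
    have hgt := h ⟨y, hys⟩ (by simp [hys, hyK, hwy])
    rw [Fin.lt_def] at hgt
    omega

end EdgeSets

section StoppingIndex

variable {V : Type*} [Fintype V] [DecidableEq V] {s K : Finset (Sym2 V)} {e : Sym2 V} {δ : ℕ}

lemma degIn_edgeFinset (G : SimpleGraph V) [DecidableRel G.Adj] (w : V) :
    degIn G.edgeFinset w = G.degree w := by
  rw [degIn, ← SimpleGraph.incidenceFinset_eq_filter, SimpleGraph.card_incidenceFinset_eq_degree]

lemma lastEdgeIs_iff (ω : Fin #s ≃ {e // e ∈ s}) (he : e ∈ s) :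
    lastEdgeIs δ ω e ↔ stopIndex δ ω = ω.symm ⟨e, he⟩ + 1 := by
  rw [lastEdgeIs, mem_prefixEdges_iff ω _ ⟨e, he⟩, mem_prefixEdges_iff ω _ ⟨e, he⟩]
  omega

lemma stopIndex_eq_succ_iff (ω : Fin #s ≃ {e // e ∈ s}) {t : ℕ}
    (ht : ∀ w, δ ≤ degIn (prefixEdges ω (t + 1)) w) :
    stopIndex δ ω = t + 1 ↔ ∃ w, degIn (prefixEdges ω t) w < δ := by
  have hstop {i : ℕ} (hi : stopIndex δ ω ≤ i) (w : V) : δ ≤ degIn (prefixEdges ω i) w :=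
    (Nat.sInf_mem (s := {i | ∀ v, δ ≤ degIn (prefixEdges ω i) v}) ⟨t + 1, ht⟩ w).trans
      (degIn_mono (prefixEdges_mono ω hi) w)
  constructor
  · intro h
    by_contra! hcon
    have : stopIndex δ ω ≤ t := Nat.sInf_le hcon
    omega
  · rintro ⟨w, hw⟩
    refine le_antisymm (Nat.sInf_le ht) (Nat.succ_le_of_lt ?_)
    by_contra! hle
    exact (hstop hle w).not_gt hw

theorem subset_finalEdges_and_lastEdgeIs_iff (hKs : K ⊆ s) (hK : ∀ w, degIn K w = δ)
    (he : e ∈ K) (ω : Fin #s ≃ {e // e ∈ s}) :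
    K ⊆ finalEdges δ ω ∧ lastEdgeIs δ ω e ↔
      ∃ w ∈ e, LiesBetween ω ((K.erase e).subtype (· ∈ s)) ⟨e, hKs he⟩
        ({y ∈ s \ K | w ∈ y}.subtype (· ∈ s)) := by
  set t : ℕ := ↑(ω.symm ⟨e, hKs he⟩)
  rw [lastEdgeIs_iff ω (hKs he)]
  calc K ⊆ finalEdges δ ω ∧ stopIndex δ ω = t + 1
      ↔ K ⊆ prefixEdges ω (t + 1) ∧ stopIndex δ ω = t + 1 :=
        and_congr_left fun h => by rw [finalEdges, h]
    _ ↔ K ⊆ prefixEdges ω (t + 1) ∧ ∃ w, degIn (prefixEdges ω t) w < δ :=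
        and_congr_right fun hsub => stopIndex_eq_succ_iff ω fun w => hK w ▸ degIn_mono hsub w
    _ ↔ _ := by
        constructor
        · rintro ⟨hsub, w, hw⟩
          obtain ⟨hwe, hX⟩ := (degIn_prefixEdges_lt_iff hKs hK he ω hsub w).1 hw
          exact ⟨w, hwe, (subset_prefixEdges_succ_iff hKs he ω).1 hsub, hX⟩
        · rintro ⟨w, hwe, hA, hX⟩
          have hsub := (subset_prefixEdges_succ_iff hKs he ω).2 hA
          exact ⟨hsub, w, (degIn_prefixEdges_lt_iff hKs hK he ω hsub w).2 ⟨hwe, hX⟩⟩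

theorem ncard_subset_finalEdges_and_lastEdgeIs_div (hKs : K ⊆ s) (hK : ∀ w, degIn K w = δ)
    {u v : V} (huv : u ≠ v) (he : s(u, v) ∈ K) :
    ({ω : Fin #s ≃ {e // e ∈ s} | K ⊆ finalEdges δ ω ∧ lastEdgeIs δ ω s(u, v)}.ncard : ℝ) /
        Fintype.card (Fin #s ≃ {e // e ∈ s}) =
      1 / #K * (1 / (#K + (degIn s u - δ)).choose #K + 1 / (#K + (degIn s v - δ)).choose #K -
        1 / (#K + (degIn s u - δ) + (degIn s v - δ)).choose #K) := by
  set A := (K.erase s(u, v)).subtype (· ∈ s)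
  set X : V → Finset {e // e ∈ s} := fun w => {y ∈ s \ K | w ∈ y}.subtype (· ∈ s)
  have hevent : {ω : Fin #s ≃ {e // e ∈ s} | K ⊆ finalEdges δ ω ∧ lastEdgeIs δ ω s(u, v)} =
      {ω | LiesBetween ω A ⟨s(u, v), hKs he⟩ (X u) ∨ LiesBetween ω A ⟨s(u, v), hKs he⟩ (X v)} := by
    ext ω
    simp only [Set.mem_ofPred_eq, subset_finalEdges_and_lastEdgeIs_iff hKs hK he, Sym2.mem_iff,
      exists_eq_or_imp, exists_eq_left]
    exact Iff.rfl
  have hA : #A = #K - 1 := by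
    rw [card_subtype, filter_true_of_mem fun y hy => hKs (mem_of_mem_erase hy),
      card_erase_of_mem he]
  have hX (w : V) : #(X w) = degIn s w - δ := by
    rw [card_subtype, filter_true_of_mem fun y hy => (mem_sdiff.1 (mem_filter.1 hy).1).1, ← hK w,
      ← degIn_sdiff hKs]
    rfl
  have hAX (w : V) : Disjoint A (X w) := disjoint_left.2 fun y hyA hyX => by
    simp only [A, X, mem_subtype, mem_filter, mem_sdiff, mem_erase] at hyA hyX
    exact hyX.1.2 hyA.2
  have hXuv : Disjoint (X u) (X v) := disjoint_left.2 fun y hyu hyv => by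
    simp only [X, mem_subtype, mem_filter, mem_sdiff] at hyu hyv
    exact hyu.1.2 ((Sym2.mem_and_mem_iff huv).1 ⟨hyu.2, hyv.2⟩ ▸ he)
  have hK0 : 0 < #K := card_pos.2 ⟨_, he⟩
  rw [hevent, ncard_liesBetween_or_div (Fintype.card_coe s) (by simp [A]) (by simp [X, he])
    (by simp [X, he]) (hAX u) (hAX v) hXuv, hA, hX u, hX v,
    factorial_pred_mul_factorial_div_factorial hK0, factorial_pred_mul_factorial_div_factorial hK0,
    factorial_pred_mul_factorial_div_factorial hK0, add_assoc]
  ring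

end StoppingIndex

theorem probability_subgraph_with_given_last_edge_general
    {V : Type*} [Fintype V] [DecidableEq V]
    (G J : SimpleGraph V) [DecidableRel G.Adj] [DecidableRel J.Adj]
    (δ : ℕ)
    (hJG : J ≤ G) (hJ : J.IsRegularOfDegree δ)
    (u v : V) (huv : J.Adj u v) (h : ℕ) (hh : h = J.edgeFinset.card) :
    ({ω : Fin G.edgeFinset.card ≃ {e : Sym2 V // e ∈ G.edgeFinset} |
        J.edgeSet ⊆ ↑(finalEdges δ ω) ∧ lastEdgeIs δ ω s(u, v)}.ncard : ℝ) /
      (Fintype.card (Fin G.edgeFinset.card ≃ {e : Sym2 V // e ∈ G.edgeFinset}) : ℝ) =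
    (1 / (h : ℝ)) *
      (1 / (((h + (G.degree u - δ)).choose h : ℝ)) +
        1 / (((h + (G.degree v - δ)).choose h : ℝ)) -
        1 / (((h + (G.degree u - δ) + (G.degree v - δ)).choose h : ℝ))) := by
  have hK (w : V) : degIn J.edgeFinset w = δ := (degIn_edgeFinset J w).trans (hJ w)
  simp only [← SimpleGraph.coe_edgeFinset, coe_subset]
  rw [ncard_subset_finalEdges_and_lastEdgeIs_div (SimpleGraph.edgeFinset_mono hJG) hK huv.ne
    (SimpleGraph.mem_edgeFinset.2 huv), degIn_edgeFinset, degIn_edgeFinset, hh]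

/-- Let `G` be a finite simple graph with minimum degree at least `δ ≥ 1`, let `J` be a
`δ`-regular spanning subgraph of `G` with `h` edges, and let `uv` be an edge of `J`;
write `Δ(w) = deg_G(w) − δ`.  The probability that `J ⊆ G_ω` and `e_{k(ω)} = uv` equals
`(1/h)·[1/C(h+Δ(u),h) + 1/C(h+Δ(v),h) − 1/C(h+Δ(u)+Δ(v),h)]`. -/
theorem probability_subgraph_with_given_last_edge
    {V : Type*} [Fintype V] [DecidableEq V]
    (G J : SimpleGraph V) [DecidableRel G.Adj] [DecidableRel J.Adj]
    (δ : ℕ) (hδ : 1 ≤ δ) (hGdeg : ∀ w : V, δ ≤ G.degree w)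
    (hJG : J ≤ G) (hJ : J.IsRegularOfDegree δ)
    (u v : V) (huv : J.Adj u v) (h : ℕ) (hh : h = J.edgeFinset.card) :
    ({ω : Fin G.edgeFinset.card ≃ {e : Sym2 V // e ∈ G.edgeFinset} |
        J.edgeSet ⊆ ↑(finalEdges δ ω) ∧ lastEdgeIs δ ω s(u, v)}.ncard : ℝ) /
      (Fintype.card (Fin G.edgeFinset.card ≃ {e : Sym2 V // e ∈ G.edgeFinset}) : ℝ) =
    (1 / (h : ℝ)) *
      (1 / (((h + (G.degree u - δ)).choose h : ℝ)) +
        1 / (((h + (G.degree v - δ)).choose h : ℝ)) -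
        1 / (((h + (G.degree u - δ) + (G.degree v - δ)).choose h : ℝ))) :=
  probability_subgraph_with_given_last_edge_general G J δ hJG hJ u v huv h hh
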